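/- Let f be a refinement morphism from a natural space 𝒱 to a natural space 𝒲. Then the induced map p ↦ f(p) from the point set 𝒱 to the point set 𝒲 is continuous with respect to the natural topologies. -/

import Mathlib

/-! # Natural Topology: basic framework (Waaldijk) -/

/-- A pre-natural space: a countable set of basic dots with a decidable
pre-apartness `apart` and a decidable refinement partial order `refines`. -/
structure PreNaturalSpace (V : Type) : Type where
  countable' : Countable V
  apart : V → V → Prop
  refines : V → V → Prop
  apart_dec : DecidableRel apart
  refines_dec : DecidableRel refines
  apart_symm : ∀ a b, apart a b → apart b a
  apart_irrefl : ∀ a, ¬ apart a a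
  apart_mono : ∀ a b c, refines a b → apart c b → apart c a
  refines_refl : ∀ a, refines a a
  refines_trans : ∀ a b c, refines a b → refines b c → refines a c
  refines_antisymm : ∀ a b, refines a b → refines b a → a = b

namespace PreNaturalSpace

variable {V W : Type}

/-- `a ≺ b` : strict refinement. -/
def strict (P : PreNaturalSpace V) (a b : V) : Prop := P.refines a b ∧ a ≠ b

/-- A point is a shrinking sequence of dots deciding every apart pair of dots. -/
structure IsPoint (P : PreNaturalSpace V) (p : ℕ → V) : Prop where
  mono : ∀ n, P.refines (p (n + 1)) (p n)
  shrink : ∀ n, ∃ m, P.strict (p m) (p n)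
  decides : ∀ a b, P.apart a b → ∃ m, P.apart (p m) a ∨ P.apart (p m) b

/-- The set of points of a pre-natural space. -/
def Pt (P : PreNaturalSpace V) : Type := { p : ℕ → V // P.IsPoint p }

/-- `p` begins with the dot `a` : some `p m ≺ a`. -/
def begins (P : PreNaturalSpace V) (p : ℕ → V) (a : V) : Prop := ∃ m, P.strict (p m) a

/-- Apartness between a dot and a point. -/
def dApart (P : PreNaturalSpace V) (a : V) (p : ℕ → V) : Prop := ∃ m, P.apart (p m) a

/-- Apartness between points. -/
def pApart (P : PreNaturalSpace V) (p q : P.Pt) : Prop := ∃ n, P.apart (p.1 n) (q.1 n)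

/-- Equivalence of points: the negation of apartness. -/
def pEquiv (P : PreNaturalSpace V) (p q : P.Pt) : Prop := ¬ P.pApart p q

variable (P : PreNaturalSpace V)

lemma refines_of_le {p : ℕ → V} (hp : ∀ n, P.refines (p (n + 1)) (p n)) :
    ∀ {m k : ℕ}, m ≤ k → P.refines (p k) (p m) := by
  intro m k h
  induction h with
  | refl => exact P.refines_refl _
  | step h ih => exact P.refines_trans _ _ _ (hp _) ih

lemma begins_mono {z : ℕ → V} (hz : P.IsPoint z) {a b : V} (hab : P.refines a b)
    (h : P.begins z a) : P.begins z b := by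
  obtain ⟨j, hj1, hj2⟩ := h
  have hzb : P.refines (z j) b := P.refines_trans _ _ _ hj1 hab
  by_cases he : z j = b
  · obtain ⟨i, hi1, hi2⟩ := hz.shrink j
    exact ⟨i, P.refines_trans _ _ _ hi1 hzb, fun h' => hi2 (h'.trans he.symm)⟩
  · exact ⟨j, hzb, he⟩

/-- The natural (apartness) topology as a predicate on subsets of the point set. -/
def NatOpen (U : Set P.Pt) : Prop :=
  ∀ x ∈ U, ∀ y : P.Pt, P.pApart y x ∨ ∃ m, { z : P.Pt | P.begins z.1 (y.1 m) } ⊆ U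

instance instTopPt : TopologicalSpace P.Pt where
  IsOpen := P.NatOpen
  isOpen_univ := fun _ _ _ => Or.inr ⟨0, fun _ _ => trivial⟩
  isOpen_inter := by
    intro U U' hU hU' x hx y
    rcases hU x hx.1 y with h | ⟨m, hm⟩
    · exact Or.inl h
    rcases hU' x hx.2 y with h | ⟨k, hk⟩
    · exact Or.inl h
    refine Or.inr ⟨max m k, fun z hz => ⟨hm ?_, hk ?_⟩⟩
    · exact P.begins_mono z.2 (P.refines_of_le y.2.mono (le_max_left m k)) hz
    · exact P.begins_mono z.2 (P.refines_of_le y.2.mono (le_max_right m k)) hz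
  isOpen_sUnion := by
    intro S hS x hx y
    obtain ⟨U, hU, hxU⟩ := hx
    rcases hS U hU x hxU y with h | ⟨m, hm⟩
    · exact Or.inl h
    · exact Or.inr ⟨m, fun z hz => ⟨U, hU, hm hz⟩⟩

lemma pEquiv_refl (p : P.Pt) : P.pEquiv p p := fun ⟨_, h⟩ => P.apart_irrefl _ h

lemma pEquiv_symm {p q : P.Pt} (h : P.pEquiv p q) : P.pEquiv q p :=
  fun ⟨n, hn⟩ => h ⟨n, P.apart_symm _ _ hn⟩

lemma pEquiv_trans {p q r : P.Pt} (hpq : P.pEquiv p q) (hqr : P.pEquiv q r) :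
    P.pEquiv p r := by
  rintro ⟨n, hn⟩
  obtain ⟨m, hm⟩ := q.2.decides (p.1 n) (r.1 n) hn
  rcases hm with hm | hm
  · -- q.1 m apart from p.1 n
    refine hpq ⟨max m n, ?_⟩
    have h1 : P.apart (p.1 n) (q.1 (max m n)) :=
      P.apart_mono _ _ _ (P.refines_of_le q.2.mono (le_max_left m n)) (P.apart_symm _ _ hm)
    have h2 : P.apart (q.1 (max m n)) (p.1 (max m n)) :=
      P.apart_mono _ _ _ (P.refines_of_le p.2.mono (le_max_right m n)) (P.apart_symm _ _ h1)
    exact P.apart_symm _ _ h2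
  · refine hqr ⟨max m n, ?_⟩
    have h1 : P.apart (r.1 n) (q.1 (max m n)) :=
      P.apart_mono _ _ _ (P.refines_of_le q.2.mono (le_max_left m n)) (P.apart_symm _ _ hm)
    exact P.apart_mono _ _ _ (P.refines_of_le r.2.mono (le_max_right m n))
      (P.apart_symm _ _ h1)

/-- The setoid of points modulo `≡`. -/
def ptSetoid : Setoid P.Pt :=
  ⟨P.pEquiv, ⟨P.pEquiv_refl, P.pEquiv_symm, P.pEquiv_trans⟩⟩

/-- `â` : the set of points beginning with the dot `a`. -/
def hatSet (a : V) : Set P.Pt := { p | P.begins p.1 a }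

/-- `ā` : the `≡`-closure of `â`. -/
def barSet (a : V) : Set P.Pt := { p | ∃ q : P.Pt, P.begins q.1 a ∧ P.pEquiv p q }

/-- A natural space is basic-open when every `ā` is open. -/
def BasicOpen : Prop := ∀ a : V, IsOpen (P.barSet a)

/-- Existence of a maximal dot. -/
def HasMaxDot : Prop := ∃ m, ∀ a, P.refines a m

/-- Every basic dot begins at least one point. -/
def AllDotsInhabited : Prop := ∀ a : V, ∃ p : ℕ → V, P.IsPoint p ∧ P.begins p a

/-- The conditions making the point set of a pre-natural space a natural space. -/
def IsNaturalSpace : Prop := P.HasMaxDot ∧ P.AllDotsInhabited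

end PreNaturalSpace

/-- A refinement morphism between (pre-)natural spaces: a map on dots sending
points to points and reflecting apartness of points. -/
structure RefMorphism {V W : Type} (P : PreNaturalSpace V) (Q : PreNaturalSpace W) : Type where
  toFun : V → W
  maps_points : ∀ p : ℕ → V, P.IsPoint p → Q.IsPoint (fun n => toFun (p n))
  reflects_apart : ∀ p q : ℕ → V, P.IsPoint p → P.IsPoint q →
    (∃ n, Q.apart (toFun (p n)) (toFun (q n))) → ∃ n, P.apart (p n) (q n)

/-- The induced map on points of a refinement morphism. -/
def RefMorphism.pointMap {V W : Type} {P : PreNaturalSpace V} {Q : PreNaturalSpace W}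
    (f : RefMorphism P Q) (p : P.Pt) : Q.Pt :=
  ⟨fun n => f.toFun (p.1 n), f.maps_points p.1 p.2⟩

namespace PreNaturalSpace

variable {V W : Type} (P : PreNaturalSpace V)

/-- Restriction of a pre-natural space to a subset of dots. -/
noncomputable def restrict (S : Set V) : PreNaturalSpace S where
  countable' := by haveI := P.countable'; exact inferInstance
  apart a b := P.apart a.1 b.1
  refines a b := P.refines a.1 b.1
  apart_dec := Classical.decRel _
  refines_dec := Classical.decRel _
  apart_symm _ _ h := P.apart_symm _ _ h
  apart_irrefl a := P.apart_irrefl a.1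
  apart_mono _ _ _ h1 h2 := P.apart_mono _ _ _ h1 h2
  refines_refl a := P.refines_refl a.1
  refines_trans _ _ _ h1 h2 := P.refines_trans _ _ _ h1 h2
  refines_antisymm _ _ h1 h2 := Subtype.ext (P.refines_antisymm _ _ h1 h2)

/-! ## Trail spaces -/

/-- A `≺`-trail: a finite strictly refining sequence `a₀ ≻ a₁ ≻ …`. -/
def Trail : Type := { l : List V // l.Chain' fun a b => P.strict b a }

lemma strict_trans_flip : Transitive (fun a b : V => P.strict b a) := by
  rintro a b c ⟨h1, h1'⟩ ⟨h2, h2'⟩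
  refine ⟨P.refines_trans _ _ _ h2 h1, fun he => ?_⟩
  exact h2' (P.refines_antisymm _ _ h2 (he ▸ h1))

lemma last_refines_of_prefix {a b : List V}
    (ha : a.Chain' fun x y => P.strict y x) (hpre : b <+: a)
    {x y : V} (hx : x ∈ a.getLast?) (hy : y ∈ b.getLast?) :
    P.refines x y := by
  haveI : IsTrans V (fun x y : V => P.strict y x) := ⟨fun _ _ _ h1 h2 => P.strict_trans_flip h1 h2⟩
  have hpw : a.Pairwise fun x y => P.strict y x := List.isChain_iff_pairwise.mp ha
  obtain ⟨t, rfl⟩ := hpre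
  rcases eq_or_ne t [] with rfl | ht
  · rw [List.append_nil] at hx
    have : x = y := by
      rw [Option.mem_def] at hx hy
      exact Option.some_injective _ (hx ▸ hy ▸ rfl)
    exact this ▸ P.refines_refl x
  · rw [List.getLast?_append_of_ne_nil _ ht] at hx
    have hxt : x ∈ t := List.mem_of_mem_getLast? hx
    have hyb : y ∈ b := List.mem_of_mem_getLast? hy
    have := (List.pairwise_append.mp hpw).2.2 y hyb x hxt
    exact this.1

/-- The trail space of a pre-natural space: dots are `≺`-trails, with
`a ⊑* b` iff `b` is an initial segment of `a`, and `a #* b` iff the last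
dots of `a` and `b` are apart. -/
noncomputable def trailSpace : PreNaturalSpace P.Trail where
  countable' := by haveI := P.countable'; exact inferInstanceAs (Countable
    { l : List V // l.Chain' fun a b => P.strict b a })
  apart a b := ∃ x ∈ a.1.getLast?, ∃ y ∈ b.1.getLast?, P.apart x y
  refines a b := b.1 <+: a.1
  apart_dec := Classical.decRel _
  refines_dec := Classical.decRel _
  apart_symm := by
    rintro a b ⟨x, hx, y, hy, hxy⟩
    exact ⟨y, hy, x, hx, P.apart_symm _ _ hxy⟩
  apart_irrefl := by
    rintro a ⟨x, hx, y, hy, hxy⟩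
    rw [Option.mem_def] at hx hy
    have : x = y := Option.some_injective _ (hx ▸ hy ▸ rfl)
    exact P.apart_irrefl x (this ▸ hxy)
  apart_mono := by
    rintro a b c hab ⟨x, hx, y, hy, hxy⟩
    have hbne : b.1 ≠ [] := by
      intro h
      rw [h] at hy
      simp at hy
    have hane : a.1 ≠ [] := by
      intro h
      exact hbne (List.prefix_nil.mp (h ▸ hab))
    obtain ⟨z, hz⟩ : ∃ z, z ∈ a.1.getLast? := by
      rcases h : a.1.getLast? with _ | z
      · exact absurd (List.getLast?_eq_none_iff.mp h) hane
      · exact ⟨z, rfl⟩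
    have hzy : P.refines z y := P.last_refines_of_prefix a.2 hab hz hy
    exact ⟨x, hx, z, hz, P.apart_mono _ _ _ hzy hxy⟩
  refines_refl a := List.prefix_refl a.1
  refines_trans _ _ _ h1 h2 := h2.trans h1
  refines_antisymm a b h1 h2 :=
    Subtype.ext (h2.eq_of_length (le_antisymm h2.length_le h1.length_le))

end PreNaturalSpace

open Classical in
/-- `p♯(n)` : the `≺`-trail obtained from `p₀, …, p_{n-1}` by deleting repetitions
(for a shrinking sequence `p`, repetitions are consecutive). -/
noncomputable def segList {V : Type} (p : ℕ → V) : ℕ → List V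
  | 0 => []
  | n + 1 =>
    if (segList p n).getLast? = some (p n) then segList p n
    else segList p n ++ [p n]

namespace PreNaturalSpace

variable {V W : Type} (P : PreNaturalSpace V)

/-- The map on trail dots sending a nonempty trail to its last element and
the empty trail to `m`. -/
def lastDot (m : V) (q : P.Trail) : V := q.1.getLast?.getD m

/-- `g` is the point map induced by a trail morphism `f` (a refinement morphism
on the trail space): `g p = f (p♯(0)), f (p♯(1)), …`. -/
def InducedByTrailMorphism (Q : PreNaturalSpace W) (f : RefMorphism P.trailSpace Q)
    (g : P.Pt → Q.Pt) : Prop :=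
  ∀ p : P.Pt, ∃ t : P.trailSpace.Pt, (∀ n, (t.1 n).1 = segList p.1 n) ∧ g p = f.pointMap t

/-- `g` is a natural morphism map: induced by a refinement morphism or by a trail morphism. -/
def IsNaturalMorphismMap (Q : PreNaturalSpace W) (g : P.Pt → Q.Pt) : Prop :=
  (∃ f : RefMorphism P Q, ∀ p, g p = f.pointMap p) ∨
  (∃ f : RefMorphism P.trailSpace Q, P.InducedByTrailMorphism Q f g)

/-- Two natural spaces are isomorphic: natural morphisms both ways, inverse up to `≡`. -/
def AreIsomorphic (Q : PreNaturalSpace W) : Prop :=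
  ∃ (f : P.Pt → Q.Pt) (g : Q.Pt → P.Pt),
    P.IsNaturalMorphismMap Q f ∧ Q.IsNaturalMorphismMap P g ∧
    (∀ x, P.pEquiv (g (f x)) x) ∧ (∀ y, Q.pEquiv (f (g y)) y)

/-- A natural space is a basic neighborhood space iff it is isomorphic to a basic-open space. -/
def IsBasicNbhdSpace : Prop :=
  ∃ (W' : Type) (Q : PreNaturalSpace W'), Q.IsNaturalSpace ∧ Q.BasicOpen ∧ P.AreIsomorphic Q

/-! ## Trees, treas, spreads, spraids, fans -/

/-- `a` is a successor of `c`. -/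
def IsSucc (a c : V) : Prop := P.strict a c ∧ ∀ b, P.strict a b → P.refines b c → b = c

/-- A successor-trail (as a list, each entry a successor of the previous one). -/
def SuccChain (l : List V) : Prop := l.Chain' fun x y => P.IsSucc y x

/-- A successor-trail from `m` to `a`. -/
def IsSuccTrailFromTo (m a : V) (l : List V) : Prop :=
  P.SuccChain l ∧ l.head? = some m ∧ l.getLast? = some a

/-- `(V,⊑)` is a tree. -/
def IsTree : Prop :=
  ∃ m, (∀ a, P.refines a m) ∧ ∀ a, ∃! l : List V, P.IsSuccTrailFromTo m a l

/-- `(V,⊑)` is a trea. -/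
def IsTrea : Prop :=
  ∃ m, (∀ a, P.refines a m) ∧ (∀ a, { b | P.refines a b }.Finite) ∧
    ∀ a, ∃ g : ℕ, ∀ l : List V, P.IsSuccTrailFromTo m a l → l.length = g

/-- Every infinite successor-trail is a point. -/
def SuccTrailsArePoints : Prop :=
  ∀ q : ℕ → V, (∀ n, P.IsSucc (q (n + 1)) (q n)) → P.IsPoint q

def IsSpread : Prop := P.IsTree ∧ P.SuccTrailsArePoints

def IsSpraid : Prop := P.IsTrea ∧ P.SuccTrailsArePoints

/-- Finitely branching: every dot has finitely many successors. -/
def FinBranching : Prop := ∀ a : V, { b | P.IsSucc b a }.Finite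

def IsFan : Prop := P.IsSpread ∧ P.FinBranching

def IsFann : Prop := P.IsSpraid ∧ P.FinBranching

end PreNaturalSpace

/-! Given `x` with `f x ∈ U` and a point `y` not apart from `x`, the images `f y` and
`f x` are equivalent, so `f y ∈ U` and some `f yᵢ` is refined into `U`. A point `z`
beginning with `yᵢ` need not have `f z` beginning with `f yᵢ`, since `f` is monotone
only along points. So splice: `y₀, …, yᵢ, zⱼ, zⱼ₊₁, …` is a point whose image begins
with `f yᵢ` and shares a tail with `f z`; open sets are closed under equivalence. -/

namespace PreNaturalSpace

variable {V : Type} (P : PreNaturalSpace V)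

lemma strict_of_refines_of_strict {a b c : V} (hab : P.refines a b) (hbc : P.strict b c) :
    P.strict a c :=
  ⟨P.refines_trans _ _ _ hab hbc.1,
    fun hac => hbc.2 (P.refines_antisymm _ _ hbc.1 (hac ▸ hab))⟩

lemma strict_of_strict_of_refines {a b c : V} (hab : P.strict a b) (hbc : P.refines b c) :
    P.strict a c :=
  ⟨P.refines_trans _ _ _ hab.1 hbc,
    fun hac => hab.2 (hac.trans (P.refines_antisymm _ _ hbc (hac ▸ hab.1)).symm)⟩

lemma apart_of_refines {a a' b b' : V} (ha : P.refines a' a) (hb : P.refines b' b)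
    (h : P.apart a b) : P.apart a' b' :=
  P.apart_mono _ _ _ hb (P.apart_symm _ _ (P.apart_mono _ _ _ ha (P.apart_symm _ _ h)))

variable {P}

lemma IsPoint.shift {p : ℕ → V} (hp : P.IsPoint p) (k : ℕ) :
    P.IsPoint fun n => p (n + k) where
  mono n := by simpa only [Nat.add_right_comm n 1 k] using hp.mono (n + k)
  shrink n := by
    obtain ⟨m, hm⟩ := hp.shrink (n + k)
    exact ⟨m, P.strict_of_refines_of_strict (P.refines_of_le hp.mono (Nat.le_add_right m k)) hm⟩
  decides a b hab := by
    obtain ⟨m, hm⟩ := hp.decides a b hab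
    have hle := P.refines_of_le hp.mono (Nat.le_add_right m k)
    exact ⟨m, hm.imp (P.apart_of_refines hle (P.refines_refl a))
      (P.apart_of_refines hle (P.refines_refl b))⟩

lemma IsPoint.of_shift {p : ℕ → V} (hmono : ∀ n, P.refines (p (n + 1)) (p n)) (k : ℕ)
    (h : P.IsPoint fun n => p (n + k)) : P.IsPoint p where
  mono := hmono
  shrink n := by
    obtain ⟨m, hm⟩ := h.shrink n
    exact ⟨m + k,
      P.strict_of_strict_of_refines hm (P.refines_of_le hmono (Nat.le_add_right n k))⟩
  decides a b hab := by
    obtain ⟨m, hm⟩ := h.decides a b hab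
    exact ⟨m + k, hm⟩

def splice (y z : ℕ → V) (i j : ℕ) (n : ℕ) : V :=
  if n ≤ i then y n else z (n - (i + 1) + j)

lemma splice_of_le (y z : ℕ → V) {i n : ℕ} (j : ℕ) (h : n ≤ i) : splice y z i j n = y n :=
  if_pos h

lemma splice_add (y z : ℕ → V) (i j n : ℕ) : splice y z i j (n + (i + 1)) = z (n + j) := by
  rw [splice, if_neg (by omega), Nat.add_sub_cancel]

lemma IsPoint.splice {y z : ℕ → V} (hy : P.IsPoint y) (hz : P.IsPoint z) {i j : ℕ}
    (hzy : P.refines (z j) (y i)) : P.IsPoint (splice y z i j) := by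
  refine .of_shift (fun n => ?_) (i + 1) ?_
  · rcases lt_trichotomy n i with h | rfl | h
    · simpa only [splice_of_le y z j h.le, splice_of_le y z j h] using hy.mono n
    · have h0 := splice_add y z n j 0
      rw [zero_add, zero_add] at h0
      rwa [h0, splice_of_le y z j le_rfl]
    · obtain ⟨k, rfl⟩ : ∃ k, n = k + (i + 1) := ⟨n - (i + 1), by omega⟩
      rw [Nat.add_right_comm, splice_add, splice_add, Nat.add_right_comm]
      exact hz.mono (k + j)
  · simpa only [splice_add] using hz.shift j

variable (P) in
lemma pEquiv_of_shift_eq {p q : P.Pt} (a b : ℕ) (h : ∀ n, p.1 (n + a) = q.1 (n + b)) :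
    P.pEquiv p q := by
  rintro ⟨n, hn⟩
  have hp := P.refines_of_le p.2.mono (show n ≤ n + b + a by omega)
  have hq := P.refines_of_le q.2.mono (show n ≤ n + b + b by omega)
  exact P.apart_irrefl _ (h (n + b) ▸ P.apart_of_refines hp hq hn)

end PreNaturalSpace

lemma IsOpen.mem_of_pEquiv {V : Type} {P : PreNaturalSpace V} {U : Set P.Pt} (hU : IsOpen U)
    {x x' : P.Pt} (hx : x ∈ U) (hxx' : P.pEquiv x' x) : x' ∈ U := by
  rcases hU x hx x' with h | ⟨m, hm⟩
  · exact absurd h hxx'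
  · exact hm (x'.2.shrink m)

lemma IsOpen.exists_hatSet_subset {V : Type} {P : PreNaturalSpace V} {U : Set P.Pt}
    (hU : IsOpen U) {x : P.Pt} (hx : x ∈ U) : ∃ m, P.hatSet (x.1 m) ⊆ U :=
  (hU x hx x).resolve_left (P.pEquiv_refl x)

lemma RefMorphism.pEquiv_pointMap {V W : Type} {P : PreNaturalSpace V}
    {Q : PreNaturalSpace W} (f : RefMorphism P Q) {p q : P.Pt} (h : P.pEquiv p q) :
    Q.pEquiv (f.pointMap p) (f.pointMap q) :=
  fun hfpq => h (f.reflects_apart p.1 q.1 p.2 q.2 hfpq)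

theorem stmt3_general {V W : Type} (P : PreNaturalSpace V) (Q : PreNaturalSpace W)
    (f : RefMorphism P Q) :
    Continuous f.pointMap := by
  refine continuous_def.2 fun U hU x hx y => ?_
  by_cases hyx : P.pApart y x
  · exact Or.inl hyx
  have hfy : f.pointMap y ∈ U := hU.mem_of_pEquiv hx (f.pEquiv_pointMap hyx)
  obtain ⟨m, hm⟩ := hU.exists_hatSet_subset hfy
  obtain ⟨i, hi⟩ := (f.pointMap y).2.shrink m
  refine Or.inr ⟨i, fun z ⟨j, hj⟩ => ?_⟩
  let w : P.Pt := ⟨PreNaturalSpace.splice y.1 z.1 i j, y.2.splice z.2 hj.1⟩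
  have hfw : f.pointMap w ∈ U :=
    hm ⟨i, by
      simpa only [RefMorphism.pointMap, w, PreNaturalSpace.splice_of_le _ _ j le_rfl] using hi⟩
  refine hU.mem_of_pEquiv hfw (Q.pEquiv_of_shift_eq j (i + 1) fun n => ?_)
  simp only [RefMorphism.pointMap, w, PreNaturalSpace.splice_add]

/-- the induced point map of a refinement morphism between natural
spaces is continuous for the natural topologies. -/
theorem stmt3 {V W : Type} (P : PreNaturalSpace V) (Q : PreNaturalSpace W)
    (hP : P.IsNaturalSpace) (hQ : Q.IsNaturalSpace) (f : RefMorphism P Q) :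
    Continuous f.pointMap :=
  stmt3_general P Q f
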